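/- For a single preconditioner (ℓ = 1), the MPGMRES search space after k iterations equals the right-preconditioned Krylov subspace: range(Z̃ₖ) = P⁻¹·span{r₀, (A P⁻¹) r₀, …, (A P⁻¹)^{k−1} r₀} = span{P⁻¹r₀, P⁻¹A P⁻¹ r₀, …, (P⁻¹A)^{k−1} P⁻¹ r₀}, so MPGMRES reduces to right-preconditioned GMRES. -/
import Mathlib

open Matrix

lemma mapSpan_mulVec {n : ℕ} (M : Matrix (Fin n) (Fin n) ℝ) (s : Set (Fin n → ℝ)) :
    Submodule.map (Matrix.toLin' M) (Submodule.span ℝ s)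
      = Submodule.span ℝ (M.mulVec '' s) := by
  rw [Submodule.map_span]
  congr 1

/-- For a single preconditioner (`ℓ = 1`), the MPGMRES search space after `k`
iterations equals the right-preconditioned Krylov subspace:
`range(Z̃ₖ) = span{P⁻¹r₀, (P⁻¹A)P⁻¹r₀, …, (P⁻¹A)^{k−1}P⁻¹r₀}`, which is the image
under `P⁻¹` of `span{r₀, (AP⁻¹)r₀, …, (AP⁻¹)^{k−1}r₀}`. -/
theorem stmt_17 {n : ℕ} (A P : Matrix (Fin n) (Fin n) ℝ)
    (hA : IsUnit A) (hP : IsUnit P) (r₀ : Fin n → ℝ) (k : ℕ) (hk : 1 ≤ k)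
    (Z V : ℕ → (Fin n → ℝ))
    (hZ1 : Z 1 = P⁻¹.mulVec r₀)
    (hZ : ∀ j, 2 ≤ j → Z j = P⁻¹.mulVec (V j))
    (hVspan : ∀ j, 1 ≤ j →
      Submodule.span ℝ {v | ∃ i, 1 ≤ i ∧ i ≤ j ∧ v = V i} =
        Submodule.span ℝ ({r₀} ∪ {w | ∃ i, 1 ≤ i ∧ i < j ∧ w = A.mulVec (Z i)}))
    (hVne : ∀ j, 1 ≤ j → V j ≠ 0) :
    Submodule.span ℝ {z | ∃ j, 1 ≤ j ∧ j ≤ k ∧ z = Z j} =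
      Submodule.span ℝ {w | ∃ j < k, w = ((P⁻¹ * A) ^ j).mulVec (P⁻¹.mulVec r₀)} ∧
    Submodule.span ℝ {z | ∃ j, 1 ≤ j ∧ j ≤ k ∧ z = Z j} =
      Submodule.map (Matrix.toLin' P⁻¹)
        (Submodule.span ℝ {w | ∃ j < k, w = ((A * P⁻¹) ^ j).mulVec r₀}) := by
  set Q := P⁻¹ with hQdef
  -- Lemma A: for 1 ≤ m,
  -- span {Z j : 1 ≤ j ≤ m} = span ({Q r₀} ∪ {(Q*A) Z i : 1 ≤ i < m})
  have lemA : ∀ m, 1 ≤ m →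
      Submodule.span ℝ {z | ∃ j, 1 ≤ j ∧ j ≤ m ∧ z = Z j} =
        Submodule.span ℝ ({Q.mulVec r₀} ∪
          {w | ∃ i, 1 ≤ i ∧ i < m ∧ w = (Q * A).mulVec (Z i)}) := by
    intro m hm
    have step1 : Submodule.span ℝ {z | ∃ j, 1 ≤ j ∧ j ≤ m ∧ z = Z j}
        = Submodule.map (Matrix.toLin' Q)
            (Submodule.span ℝ {v | ∃ i, 1 ≤ i ∧ i ≤ m ∧ v = V i}) := by
      apply le_antisymm
      · rw [Submodule.span_le]
        rintro z ⟨j, hj1, hjm, rfl⟩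
        rcases eq_or_lt_of_le hj1 with h1 | h2
        · -- j = 1
          have hr : r₀ ∈ Submodule.span ℝ {v | ∃ i, 1 ≤ i ∧ i ≤ m ∧ v = V i} := by
            rw [hVspan m hm]
            exact Submodule.subset_span (Or.inl rfl)
          have : Z j = Q.mulVec r₀ := by rw [← h1]; exact hZ1
          rw [this]
          exact ⟨r₀, hr, by simp [Matrix.toLin'_apply]⟩
        · -- 2 ≤ j
          have h2' : 2 ≤ j := h2
          rw [hZ j h2']
          exact ⟨V j, Submodule.subset_span ⟨j, hj1, hjm, rfl⟩,
            by simp [Matrix.toLin'_apply]⟩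
      · rw [mapSpan_mulVec, Submodule.span_le]
        rintro w ⟨v, ⟨i, hi1, him, rfl⟩, rfl⟩
        rcases eq_or_lt_of_le hi1 with h1 | h2
        · -- i = 1 : V 1 ∈ span {r₀}
          have hV1 : V i ∈ Submodule.span ℝ ({r₀} : Set (Fin n → ℝ)) := by
            have := hVspan 1 le_rfl
            have hmem : V i ∈ Submodule.span ℝ {v | ∃ i', 1 ≤ i' ∧ i' ≤ 1 ∧ v = V i'} :=
              Submodule.subset_span ⟨1, le_rfl, le_rfl, by rw [← h1]⟩
            rw [this] at hmem
            have hempty : {w | ∃ i', 1 ≤ i' ∧ i' < 1 ∧ w = A.mulVec (Z i')} = (∅ : Set (Fin n → ℝ)) := by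
              ext w; simp only [Set.mem_setOf_eq, Set.mem_empty_iff_false, iff_false]
              rintro ⟨i', h1', h2', _⟩; omega
            rwa [hempty, Set.union_empty] at hmem
          rcases Submodule.mem_span_singleton.mp hV1 with ⟨c, hc⟩
          have : Q.mulVec (V i) = c • Q.mulVec r₀ := by
            rw [← hc, Matrix.mulVec_smul]
          rw [this]
          exact Submodule.smul_mem _ c (Submodule.subset_span ⟨1, le_rfl, hm, hZ1.symm⟩)
        · -- 2 ≤ i : Q V i = Z i
          have h2' : 2 ≤ i := h2
          have : Q.mulVec (V i) = Z i := (hZ i h2').symm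
          rw [this]
          exact Submodule.subset_span ⟨i, hi1, him, rfl⟩
    rw [step1, hVspan m hm, mapSpan_mulVec]
    congr 1
    rw [Set.image_union]
    congr 1
    · simp
    · ext w
      constructor
      · rintro ⟨v, ⟨i, hi1, him, rfl⟩, rfl⟩
        exact ⟨i, hi1, him, by rw [Matrix.mulVec_mulVec]⟩
      · rintro ⟨i, hi1, him, rfl⟩
        exact ⟨A.mulVec (Z i), ⟨i, hi1, him, rfl⟩, by rw [Matrix.mulVec_mulVec]⟩
  -- Main induction: span {Z j : 1 ≤ j ≤ m} = span {(QA)^j (Q r₀) : j < m}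
  have main : ∀ m, 1 ≤ m →
      Submodule.span ℝ {z | ∃ j, 1 ≤ j ∧ j ≤ m ∧ z = Z j} =
        Submodule.span ℝ {w | ∃ j < m, w = ((Q * A) ^ j).mulVec (Q.mulVec r₀)} := by
    intro m hm
    induction m, hm using Nat.le_induction with
    | base =>
      rw [lemA 1 le_rfl]
      congr 1
      ext w
      simp only [Set.mem_union, Set.mem_singleton_iff, Set.mem_setOf_eq]
      constructor
      · rintro (rfl | ⟨i, h1, h2, _⟩)
        · exact ⟨0, by omega, by simp⟩
        · omega
      · rintro ⟨j, hj, rfl⟩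
        left
        have : j = 0 := by omega
        subst this; simp
    | succ m hm ih =>
      rw [lemA (m + 1) (by omega)]
      have hset : {w | ∃ i, 1 ≤ i ∧ i < m + 1 ∧ w = (Q * A).mulVec (Z i)}
          = (Q * A).mulVec '' {z | ∃ j, 1 ≤ j ∧ j ≤ m ∧ z = Z j} := by
        ext w
        constructor
        · rintro ⟨i, h1, h2, rfl⟩; exact ⟨Z i, ⟨i, h1, by omega, rfl⟩, rfl⟩
        · rintro ⟨z, ⟨i, h1, h2, rfl⟩, rfl⟩; exact ⟨i, h1, by omega, rfl⟩
      rw [hset, Submodule.span_union, ← mapSpan_mulVec, ih, mapSpan_mulVec,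
        ← Submodule.span_union]
      congr 1
      ext w
      simp only [Set.mem_union, Set.mem_singleton_iff, Set.mem_image, Set.mem_setOf_eq]
      constructor
      · rintro (rfl | ⟨v, ⟨j, hj, rfl⟩, rfl⟩)
        · exact ⟨0, by omega, by simp⟩
        · exact ⟨j + 1, by omega, by rw [Matrix.mulVec_mulVec, ← pow_succ']⟩
      · rintro ⟨j, hj, rfl⟩
        rcases Nat.eq_zero_or_pos j with rfl | hjpos
        · left; simp
        · right
          obtain _ | i := j
          · omega
          refine ⟨((Q * A) ^ i).mulVec (Q.mulVec r₀), ⟨i, by omega, rfl⟩, ?_⟩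
          rw [Matrix.mulVec_mulVec, ← pow_succ']
  refine ⟨main k hk, ?_⟩
  rw [main k hk, mapSpan_mulVec]
  congr 1
  ext w
  simp only [Set.mem_setOf_eq, Set.mem_image]
  constructor
  · rintro ⟨j, hj, rfl⟩
    refine ⟨((A * Q) ^ j).mulVec r₀, ⟨j, hj, rfl⟩, ?_⟩
    have hsc : SemiconjBy Q (A * Q) (Q * A) := by
      unfold SemiconjBy; rw [mul_assoc]
    rw [Matrix.mulVec_mulVec, Matrix.mulVec_mulVec, hsc.pow_right j]
  · rintro ⟨v, ⟨j, hj, rfl⟩, rfl⟩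
    refine ⟨j, hj, ?_⟩
    have hsc : SemiconjBy Q (A * Q) (Q * A) := by
      unfold SemiconjBy; rw [mul_assoc]
    rw [Matrix.mulVec_mulVec, Matrix.mulVec_mulVec, hsc.pow_right j]
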